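/- arXiv:1405.1900 — 6 statements merged into one kernel-verified Lean document; each statement's English description precedes it below -/
import Mathlib

section
/- Let G be a finite abelian group with unit element e, and let x_g (g in G) be complex numbers. Then in the group algebra C[G], the product over all characters χ of G of the elements Σ_{g∈G} χ(g) x_g g equals Θ(G)·e, where Θ(G) = ∏_{χ∈Ĝ} Σ_{g∈G} χ(g) x_g is the group determinant of G. -/
/-!
Twisting `ℂ[G]` by a character `ψ`, i.e. `g ↦ ψ(g) g`, permutes the factors of the product
`∏_χ Σ_g χ(g) x_g g`, sending the factor of `χ` to that of `χψ`; so the product is fixed by every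
twist. Since characters separate the points of `G`, an element fixed by all twists is supported
at `e`, and its coefficient there is read off by the augmentation `g ↦ 1`, which sends the
product to `Θ(G)`.
-/

open MonoidAlgebra

theorem MonoidHom.isUnit_of_group {G M : Type*} [Group G] [CommMonoid M] (ψ : G →* M) :
    IsUnit ψ :=
  toHomUnitsMulEquiv.symm_apply_apply ψ ▸
    (Group.isUnit (toHomUnitsMulEquiv ψ)).map toHomUnitsMulEquiv.symm

theorem MonoidHom.exists_apply_ne_one {G k : Type*} [CommGroup G] [Finite G] [CommMonoid k]
    [HasEnoughRootsOfUnity k (Monoid.exponent G)] {a : G} (ha : a ≠ 1) :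
    ∃ ψ : G →* k, ψ a ≠ 1 := by
  obtain ⟨φ, hφ⟩ := CommGroup.exists_apply_ne_one_of_hasEnoughRootsOfUnity G k ha
  exact ⟨(Units.coeHom k).comp φ, fun h ↦ hφ (Units.ext h)⟩

namespace MonoidAlgebra

variable {k G : Type*} [CommSemiring k]

section Monoid

variable [Monoid G]

noncomputable def twist (ψ : G →* k) : k[G] →ₐ[k] k[G] :=
  lift k k[G] G
    { toFun g := single g (ψ g)
      map_one' := by rw [map_one, one_def]
      map_mul' g h := by rw [single_mul_single, map_mul] }

@[simp]
theorem twist_single (ψ : G →* k) (g : G) (c : k) : twist ψ (single g c) = single g (c * ψ g) := by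
  simp [twist]

theorem coeff_twist (ψ : G →* k) (f : k[G]) (h : G) :
    (twist ψ f).coeff h = f.coeff h * ψ h := by
  induction f using induction_linear with
  | zero => simp
  | add f₁ f₂ h₁ h₂ => simp [h₁, h₂, add_mul]
  | single g c => by_cases hg : g = h <;> simp [coeff_single, hg]

end Monoid

theorem eq_single_one_of_forall_twist_eq {k : Type*} [CommRing k] [IsDomain k] [CommGroup G]
    [Finite G] [HasEnoughRootsOfUnity k (Monoid.exponent G)] {f : k[G]}
    (hf : ∀ ψ : G →* k, twist ψ f = f) : f = single 1 (lift k k G 1 f) := by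
  have hsupp : ∀ h ≠ (1 : G), f.coeff h = 0 := by
    intro h hh
    obtain ⟨ψ, hψ⟩ := MonoidHom.exists_apply_ne_one (k := k) hh
    have hfix : f.coeff h * ψ h = f.coeff h := by rw [← coeff_twist, hf]
    have : f.coeff h * (ψ h - 1) = 0 := by rw [mul_sub, hfix, mul_one, sub_self]
    exact (mul_eq_zero.mp this).resolve_right (sub_ne_zero.mpr hψ)
  have hf₁ : f = single 1 (f.coeff 1) := by
    ext h
    by_cases hh : h = 1
    · simp [hh]
    · simp [hsupp h hh, coeff_single, Ne.symm hh]
  rw [hf₁]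
  simp

end MonoidAlgebra

/-- Frobenius' factorization of the group determinant of a finite abelian group,
refined to an identity in the group algebra `ℂ[G]`:
`∏_χ (Σ_g χ(g) x_g g) = Θ(G) • e` where `Θ(G) = ∏_χ Σ_g χ(g) x_g`. -/
theorem group_determinant_group_algebra_abelian
    (G : Type) [CommGroup G] [Fintype G] [Fintype (G →* ℂ)] (x : G → ℂ) :
    ∏ χ : G →* ℂ, (∑ g : G, (MonoidAlgebra.single g (χ g * x g) : MonoidAlgebra ℂ G)) =
      MonoidAlgebra.single (1 : G) (∏ χ : G →* ℂ, ∑ g : G, χ g * x g) := by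
  set P : ℂ[G] := ∏ χ : G →* ℂ, ∑ g : G, single g (χ g * x g)
  have htwist : ∀ ψ : G →* ℂ, twist ψ P = P := by
    intro ψ
    calc twist ψ P = ∏ χ : G →* ℂ, ∑ g : G, single g ((χ * ψ) g * x g) := by
          simp only [P, map_prod, map_sum, twist_single, MonoidHom.mul_apply, mul_right_comm]
      _ = P := Fintype.prod_equiv ψ.isUnit_of_group.unit.mulRight _ _ fun _ ↦ rfl
  rw [eq_single_one_of_forall_twist_eq htwist]
  simp [P, map_prod, map_sum]
end

section
/- Let G be D_m or Q_m, χ₁ the trivial degree-one character and χ₂ the degree-one character with χ₂(a)=1, χ₂(b)=−1. Then (Σ_{g∈G} χ₁(g) x_g)(Σ_{g'∈G} χ₂(g') x_{g'}) = Σ_{h∈⟨a⟩} A_h, where A_h = Σ_{g∈⟨a⟩} (x_g x_{hg} − x_{gb} x_{hgb^{-1}}). -/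
/-- `A_h` for the dihedral group `D_m`. -/
noncomputable def dihedralA (m : ℕ) [NeZero m] (x : DihedralGroup m → ℂ) (h : DihedralGroup m) : ℂ :=
  ∑ i : ZMod m,
    (x (DihedralGroup.r i) * x (h * DihedralGroup.r i) -
      x (DihedralGroup.r i * DihedralGroup.sr 0) *
        x (h * DihedralGroup.r i * (DihedralGroup.sr 0)⁻¹))

/-- `A_h` for the generalized quaternion group `Q_m`. -/
noncomputable def quaternionA (m : ℕ) [NeZero m] (x : QuaternionGroup m → ℂ) (h : QuaternionGroup m) : ℂ :=
  ∑ i : ZMod (2 * m),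
    (x (QuaternionGroup.a i) * x (h * QuaternionGroup.a i) -
      x (QuaternionGroup.a i * QuaternionGroup.xa 0) *
        x (h * QuaternionGroup.a i * (QuaternionGroup.xa 0)⁻¹))

/-- The degree one character `χ₂` of `D_m`: trivial on `⟨a⟩`, `−1` on the other coset. -/
def dihedralChi2 (m : ℕ) : DihedralGroup m → ℂ
  | DihedralGroup.r _ => 1
  | DihedralGroup.sr _ => -1

/-- The degree one character `χ₂` of `Q_m`: trivial on `⟨a⟩`, `−1` on the other coset. -/
def quaternionChi2 (m : ℕ) : QuaternionGroup m → ℂ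
  | QuaternionGroup.a _ => 1
  | QuaternionGroup.xa _ => -1

/-!
Both sides equal `(Σ_{⟨a⟩} x)² − (Σ_{G∖⟨a⟩} x)²`. The left side is `(P + S)(P − S)` for the sums
`P`, `S` over the two cosets of `⟨a⟩`. On the right, for fixed `g ∈ ⟨a⟩` the maps `h ↦ hg` and
`h ↦ hgb⁻¹` are bijections from `⟨a⟩` onto `⟨a⟩` and onto the coset `⟨a⟩b`, and `g ↦ gb` is one
onto `⟨a⟩b`, so each of the two double sums factors.
-/

open Finset

theorem sum_sum_mul_equiv {ι κ R : Type*} [Fintype ι] [Fintype κ] [NonUnitalNonAssocSemiring R]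
    (f : ι → R) (g : κ → R) (σ : ι ≃ ι) (τ : ι → κ ≃ κ) :
    ∑ k, ∑ i, f (σ i) * g (τ i k) = (∑ i, f i) * ∑ k, g k := by
  calc ∑ k, ∑ i, f (σ i) * g (τ i k) = ∑ i, f (σ i) * ∑ k, g (τ i k) := by
        rw [sum_comm]; simp only [mul_sum]
    _ = (∑ i, f i) * ∑ k, g k := by simp only [Equiv.sum_comp, ← sum_mul]

theorem sum_sum_mul_add_sub_mul_sub_eq_sq_sub_sq {α R : Type*} [Fintype α] [AddCommGroup α] [Ring R]
    (f g : α → R) (c d : α) :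
    ∑ k, ∑ i, (f i * f (k + i) - g (c - i) * g (d - (k + i))) =
      (∑ i, f i) ^ 2 - (∑ i, g i) ^ 2 := by
  have translate : ∑ k, ∑ i, f i * f (k + i) = (∑ i, f i) * ∑ i, f i :=
    sum_sum_mul_equiv f f (Equiv.refl α) Equiv.addRight
  have reflect : ∑ k, ∑ i, g (c - i) * g (d - (k + i)) = (∑ i, g i) * ∑ i, g i :=
    sum_sum_mul_equiv g g (Equiv.subLeft c) fun i => (Equiv.addRight i).trans (Equiv.subLeft d)
  simp only [sum_sub_distrib, translate, reflect, sq]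

namespace DihedralGroup

variable {n : ℕ} [NeZero n]

theorem sum_eq_sum_r_add_sum_sr {M : Type*} [AddCommMonoid M] (f : DihedralGroup n → M) :
    ∑ g, f g = ∑ i, f (r i) + ∑ i, f (sr i) := by
  rw [← equivSum.symm.sum_comp, Fintype.sum_sum_type]
  rfl

theorem sum_mul_sum_dihedralChi2_mul (x : DihedralGroup n → ℂ) :
    (∑ g, x g) * (∑ g, dihedralChi2 n g * x g) = (∑ i, x (r i)) ^ 2 - (∑ i, x (sr i)) ^ 2 := by
  simp only [sum_eq_sum_r_add_sum_sr, dihedralChi2, one_mul, neg_one_mul, sum_neg_distrib]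
  ring

theorem sum_dihedralA_r (x : DihedralGroup n → ℂ) :
    ∑ k, dihedralA n x (r k) = (∑ i, x (r i)) ^ 2 - (∑ i, x (sr i)) ^ 2 := by
  simp only [dihedralA, r_mul_r, r_mul_sr, inv_sr]
  exact sum_sum_mul_add_sub_mul_sub_eq_sq_sub_sq (fun i => x (r i)) (fun i => x (sr i)) 0 0

end DihedralGroup

namespace QuaternionGroup

variable {n : ℕ}

theorem inv_xa (i : ZMod (2 * n)) : (xa i)⁻¹ = xa ((n : ZMod (2 * n)) + i) :=
  rfl

def equivSum : QuaternionGroup n ≃ ZMod (2 * n) ⊕ ZMod (2 * n) where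
  toFun
    | a j => .inl j
    | xa j => .inr j
  invFun
    | .inl j => a j
    | .inr j => xa j
  left_inv := by rintro (j | j) <;> rfl
  right_inv := by rintro (j | j) <;> rfl

variable [NeZero n]

theorem sum_eq_sum_a_add_sum_xa {M : Type*} [AddCommMonoid M] (f : QuaternionGroup n → M) :
    ∑ g, f g = ∑ i, f (a i) + ∑ i, f (xa i) := by
  rw [← equivSum.symm.sum_comp, Fintype.sum_sum_type]
  rfl

theorem sum_mul_sum_quaternionChi2_mul (y : QuaternionGroup n → ℂ) :
    (∑ g, y g) * (∑ g, quaternionChi2 n g * y g) = (∑ i, y (a i)) ^ 2 - (∑ i, y (xa i)) ^ 2 := by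
  simp only [sum_eq_sum_a_add_sum_xa, quaternionChi2, one_mul, neg_one_mul, sum_neg_distrib]
  ring

theorem sum_quaternionA_a (y : QuaternionGroup n → ℂ) :
    ∑ k, quaternionA n y (a k) = (∑ i, y (a i)) ^ 2 - (∑ i, y (xa i)) ^ 2 := by
  simp only [quaternionA, a_mul_a, a_mul_xa, inv_xa]
  exact sum_sum_mul_add_sub_mul_sub_eq_sq_sub_sq (fun i => y (a i)) (fun i => y (xa i)) 0 (n + 0)

end QuaternionGroup

/-- For `G = D_m` or `Q_m`:
`(Σ_{g∈G} χ₁(g) x_g)(Σ_{g'∈G} χ₂(g') x_{g'}) = Σ_{h∈⟨a⟩} A_h`. -/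
theorem chi1_mul_chi2_eq_sum_A (m : ℕ) [NeZero m]
    (x : DihedralGroup m → ℂ) (y : QuaternionGroup m → ℂ) :
    ((∑ g : DihedralGroup m, x g) * (∑ g' : DihedralGroup m, dihedralChi2 m g' * x g') =
      ∑ k : ZMod m, dihedralA m x (DihedralGroup.r k)) ∧
    ((∑ g : QuaternionGroup m, y g) * (∑ g' : QuaternionGroup m, quaternionChi2 m g' * y g') =
      ∑ k : ZMod (2 * m), quaternionA m y (QuaternionGroup.a k)) :=
  ⟨by rw [DihedralGroup.sum_mul_sum_dihedralChi2_mul, DihedralGroup.sum_dihedralA_r],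
    by rw [QuaternionGroup.sum_mul_sum_quaternionChi2_mul, QuaternionGroup.sum_quaternionA_a]⟩
end

section
/- Let G = D_m with m ≥ 1, ω a primitive m-th root of unity, and for 1 ≤ l ≤ m−1 let φ_l be the degree-two representation with φ_l(a^k) = diag(ω^{lk}, ω^{-lk}) and φ_l(a^k b) = [[0, ω^{lk}],[ω^{-lk}, 0]]. Then det(Σ_{g∈G} φ_l(g) x_g) = Σ_{h∈⟨a⟩} χ'_l(h) A_h, where χ'_l(a^k) = ω^{lk} and A_h = Σ_{g∈⟨a⟩}(x_g x_{hg} − x_{gb} x_{hgb^{-1}}). -/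
open Finset DihedralGroup

theorem Matrix.det_sum_smul_diag_add_smul_antidiag {ι R : Type*} [CommRing R] (s : Finset ι)
    (u v p q : ι → R) :
    (∑ k ∈ s, (u k • !![p k, 0; 0, q k] + v k • !![0, p k; q k, 0])).det =
      (∑ k ∈ s, u k * p k) * (∑ k ∈ s, u k * q k) -
        (∑ k ∈ s, v k * p k) * (∑ k ∈ s, v k * q k) := by
  simp [Matrix.det_fin_two, Matrix.sum_apply]

theorem AddChar.sum_mul_sum_inv {A R : Type*} [AddCommGroup A] [Fintype A] [Semifield R]
    (ψ : AddChar A R) (f g : A → R) :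
    (∑ a, f a * ψ a) * (∑ b, g b * (ψ b)⁻¹) = ∑ h, ψ h * ∑ b, g b * f (h + b) := by
  calc (∑ a, f a * ψ a) * (∑ b, g b * (ψ b)⁻¹)
      = ∑ b, ∑ a, g b * f a * ψ (a - b) := by
        rw [sum_mul_sum, sum_comm]
        refine sum_congr rfl fun b _ => sum_congr rfl fun a _ => ?_
        rw [AddChar.map_sub_eq_div, div_eq_mul_inv]
        ring
    _ = ∑ b, ∑ h, g b * f (h + b) * ψ h := by
        refine sum_congr rfl fun b _ => (Fintype.sum_equiv (Equiv.subRight b) _ _ ?_)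
        intro a
        simp
    _ = ∑ h, ψ h * ∑ b, g b * f (h + b) := by
        rw [sum_comm]
        simp only [mul_sum, mul_comm]

theorem dihedralA_r {m : ℕ} [NeZero m] (x : DihedralGroup m → ℂ) (k : ZMod m) :
    dihedralA m x (r k) =
      ∑ i, (x (r i) * x (r (k + i)) - x (r i * sr 0) * x (r (k + i) * sr 0)) := by
  simp only [dihedralA, r_mul_r, inv_sr]

theorem det_degree_two_rep_dihedral_general (m : ℕ) [NeZero m] (ω : ℂ)
    (hω : IsPrimitiveRoot ω m) (l : ℕ)
    (x : DihedralGroup m → ℂ) :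
    (∑ k : ZMod m,
        (x (DihedralGroup.r k) • !![ω ^ (l * k.val), 0; 0, (ω ^ (l * k.val))⁻¹] +
         x (DihedralGroup.r k * DihedralGroup.sr 0) •
            !![0, ω ^ (l * k.val); (ω ^ (l * k.val))⁻¹, 0] :
          Matrix (Fin 2) (Fin 2) ℂ)).det =
      ∑ k : ZMod m, ω ^ (l * k.val) * dihedralA m x (DihedralGroup.r k) := by
  have hζ : (ω ^ l) ^ m = 1 := by rw [← pow_mul, mul_comm, pow_mul, hω.pow_eq_one, one_pow]
  have hψ (k : ZMod m) : ω ^ (l * k.val) = AddChar.zmodChar m hζ k := by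
    rw [AddChar.zmodChar_apply, pow_mul]
  simp only [hψ, Matrix.det_sum_smul_diag_add_smul_antidiag, AddChar.sum_mul_sum_inv,
    dihedralA_r, ← sum_sub_distrib, ← mul_sub]

/-- For the degree two representation `φ_l` of `D_m` (with `φ_l(a^k) = diag(ω^{lk}, ω^{-lk})`
and `φ_l(a^k b) = [[0, ω^{lk}],[ω^{-lk}, 0]]`, `ω` a primitive `m`-th root of unity,
`1 ≤ l ≤ m − 1`), we have `det(Σ_{g∈G} φ_l(g) x_g) = Σ_{h∈⟨a⟩} χ'_l(h) A_h`. -/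
theorem det_degree_two_rep_dihedral (m : ℕ) [NeZero m] (ω : ℂ)
    (hω : IsPrimitiveRoot ω m) (l : ℕ) (hl1 : 1 ≤ l) (hl2 : l ≤ m - 1)
    (x : DihedralGroup m → ℂ) :
    (∑ k : ZMod m,
        (x (DihedralGroup.r k) • !![ω ^ (l * k.val), 0; 0, (ω ^ (l * k.val))⁻¹] +
         x (DihedralGroup.r k * DihedralGroup.sr 0) •
            !![0, ω ^ (l * k.val); (ω ^ (l * k.val))⁻¹, 0] :
          Matrix (Fin 2) (Fin 2) ℂ)).det =
      ∑ k : ZMod m, ω ^ (l * k.val) * dihedralA m x (DihedralGroup.r k) :=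
  det_degree_two_rep_dihedral_general m ω hω l x
end

section
/- Let G be D_m or Q_m and define α₁ = Σ_{g∈G} x_g g and α₂ = Σ_{g∈⟨a⟩} χ₂(g) x_{g^{-1}} g + Σ_{g∈G\⟨a⟩} χ₂(g) x_g g in C[G], where χ₂ is the degree-one character trivial on ⟨a⟩ with χ₂(b) = −1. Then α₁ α₂ = Σ_{h∈⟨a⟩} A_h h, where A_h = Σ_{g∈⟨a⟩}(x_g x_{hg} − x_{gb} x_{hgb^{-1}}). -/
open MonoidAlgebra

theorem MonoidAlgebra.sum_single_mul_sum_single {G ι R : Type*} [Monoid G] [Fintype ι]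
    [Semiring R] (u v w : ι → G) (e : ι → ι ≃ ι) (he : ∀ i k, u i * v k = w (e i k))
    (f g : ι → R) :
    (∑ i, single (u i) (f i)) * (∑ k, single (v k) (g k)) =
      ∑ j, single (w j) (∑ i, f i * g ((e i).symm j)) := by
  calc _ = ∑ i, ∑ k, single (w (e i k)) (f i * g k) := by
        simp only [Finset.sum_mul_sum, single_mul_single, he]
    _ = ∑ i, ∑ j, single (w j) (f i * g ((e i).symm j)) :=
        Finset.sum_congr rfl fun i _ => Fintype.sum_equiv (e i) _ _ fun k => by simp
    _ = _ := by
        rw [Finset.sum_comm]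
        exact Finset.sum_congr rfl fun j _ => (map_sum (singleAddHom (w j)) _ _).symm

/-- `G = ⟨a⟩ ⊔ ⟨a⟩b` with `r i = aⁱ`, `s i = b aⁱ`, `b a b⁻¹ = a⁻¹` and `b² = a^c`:
`D_m` is `(r, sr, 0)` and `Q_m` is `(a, xa, m)`. -/
structure IsDihedralLike {G Z : Type*} [Monoid G] [AddCommGroup Z] (r s : Z → G) (c : Z) :
    Prop where
  bijective : Function.Bijective (Sum.elim r s)
  r_mul_r : ∀ i j, r i * r j = r (i + j)
  r_mul_s : ∀ i j, r i * s j = s (j - i)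
  s_mul_r : ∀ i j, s i * r j = s (i + j)
  s_mul_s : ∀ i j, s i * s j = r (c + j - i)

namespace IsDihedralLike

variable {G Z : Type*} [Group G] [AddCommGroup Z] {r s : Z → G} {c : Z}

theorem r_zero (hG : IsDihedralLike r s c) : r 0 = 1 :=
  (mul_eq_left (a := r 0)).mp (by rw [hG.r_mul_r, add_zero])

theorem r_inv (hG : IsDihedralLike r s c) (i : Z) : (r i)⁻¹ = r (-i) :=
  inv_eq_of_mul_eq_one_right (by rw [hG.r_mul_r, add_neg_cancel, hG.r_zero])

theorem add_self (hG : IsDihedralLike r s c) : c + c = 0 := by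
  have hs : Function.Injective s := hG.bijective.injective.comp Sum.inr_injective
  have h := mul_assoc (s 0) (s 0) (s 0)
  rw [hG.s_mul_s, hG.r_mul_s, hG.s_mul_r, add_zero, sub_zero, zero_sub, zero_add] at h
  exact neg_eq_iff_add_eq_zero.mp (hs h)

theorem s_zero_inv (hG : IsDihedralLike r s c) : (s 0)⁻¹ = s c :=
  inv_eq_of_mul_eq_one_right (by rw [hG.s_mul_s, sub_zero, hG.add_self, hG.r_zero])

theorem sum_univ_eq [Fintype Z] [Fintype G] {M : Type*} [AddCommMonoid M]
    (hG : IsDihedralLike r s c) (f : G → M) :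
    ∑ g, f g = ∑ i, f (r i) + ∑ i, f (s i) :=
  (Fintype.sum_bijective _ hG.bijective _ f fun _ => rfl).symm.trans (Fintype.sum_sum_type _)

theorem sum_single_add_sum_single_mul [Fintype Z] {R : Type*} [Semiring R]
    (hG : IsDihedralLike r s c) (a b a' b' : Z → R) :
    (∑ i, single (r i) (a i) + ∑ i, single (s i) (b i)) *
        (∑ i, single (r i) (a' i) + ∑ i, single (s i) (b' i)) =
      ∑ j, single (r j) (∑ i, (a i * a' (j - i) + b i * b' (j + i - c))) +
        ∑ j, single (s j) (∑ i, (a i * b' (j + i) + b i * a' (j - i))) := by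
  rw [add_mul, mul_add, mul_add,
    sum_single_mul_sum_single r r r (fun i => Equiv.addLeft i) hG.r_mul_r,
    sum_single_mul_sum_single r s s (fun i => Equiv.subRight i) hG.r_mul_s,
    sum_single_mul_sum_single s r s (fun i => Equiv.addLeft i) hG.s_mul_r,
    sum_single_mul_sum_single s s r (fun i => (Equiv.addLeft c).trans (Equiv.subRight i))
      hG.s_mul_s]
  simp only [Equiv.addLeft_symm, Equiv.coe_addLeft, Equiv.subRight_symm_apply, Equiv.symm_trans,
    Equiv.trans_apply, sub_eq_neg_add, Finset.sum_add_distrib, single_add]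
  abel

theorem sum_single_mul_twist [Fintype Z] [Fintype G] {R : Type*} [CommRing R]
    (hG : IsDihedralLike r s c) (x : G → R) :
    (∑ g, single g (x g)) *
        (∑ k, single (r k) (x (r k)⁻¹) + ∑ k, single (s k) (-x (s k))) =
      ∑ k, single (r k)
        (∑ i, (x (r i) * x (r k * r i) - x (r i * s 0) * x (r k * r i * (s 0)⁻¹))) := by
  have coset_coeff : ∀ j, ∑ i, (x (r i) * -x (s (j + i)) + x (s i) * x (r (j - i))⁻¹) = 0 := by
    intro j
    have h : ∑ i, x (s i) * x (r (j - i))⁻¹ = ∑ i, x (r i) * x (s (j + i)) :=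
      Fintype.sum_equiv (Equiv.subRight j) _ _ fun i => by simp [hG.r_inv, mul_comm]
    simp only [Finset.sum_add_distrib, h, mul_neg, Finset.sum_neg_distrib, neg_add_cancel]
  have subgroup_coeff : ∀ j, ∑ i, (x (r i) * x (r (j - i))⁻¹ + x (s i) * -x (s (j + i - c))) =
      ∑ i, (x (r i) * x (r j * r i) - x (r i * s 0) * x (r j * r i * (s 0)⁻¹)) := by
    intro j
    have h₁ : ∑ i, x (r i) * x (r (j - i))⁻¹ = ∑ i, x (r i) * x (r j * r i) :=
      Fintype.sum_equiv (Equiv.subRight j) _ _ fun i => by simp [hG.r_inv, hG.r_mul_r, mul_comm]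
    have h₂ : ∑ i, x (s i) * x (s (j + i - c)) = ∑ i, x (r i * s 0) * x (r j * r i * (s 0)⁻¹) :=
      Fintype.sum_equiv (Equiv.subLeft (c - j)) _ _ fun i => by
        simp only [hG.r_mul_r, hG.r_mul_s, hG.s_zero_inv, Equiv.subLeft_apply]
        rw [show c - (j + (c - j - i)) = i by abel, show 0 - (c - j - i) = j + i - c by abel,
          mul_comm]
    rw [Finset.sum_add_distrib, Finset.sum_sub_distrib, h₁, ← h₂]
    simp only [mul_neg, Finset.sum_neg_distrib, sub_eq_add_neg]
  rw [hG.sum_univ_eq, hG.sum_single_add_sum_single_mul]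
  simp only [coset_coeff, subgroup_coeff, single_zero, Finset.sum_const_zero, add_zero]

end IsDihedralLike

theorem DihedralGroup.isDihedralLike (n : ℕ) :
    IsDihedralLike (r : ZMod n → DihedralGroup n) sr 0 where
  bijective := by
    refine ⟨?_, ?_⟩
    · rintro (i | i) (j | j) h <;> simp_all
    · rintro (i | i)
      exacts [⟨.inl i, rfl⟩, ⟨.inr i, rfl⟩]
  r_mul_r := r_mul_r
  r_mul_s := r_mul_sr
  s_mul_r := sr_mul_r
  s_mul_s i j := by rw [sr_mul_sr, zero_add]

theorem QuaternionGroup.isDihedralLike (n : ℕ) :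
    IsDihedralLike (a : ZMod (2 * n) → QuaternionGroup n) xa n where
  bijective := by
    refine ⟨?_, ?_⟩
    · rintro (i | i) (j | j) h <;> simp_all
    · rintro (i | i)
      exacts [⟨.inl i, rfl⟩, ⟨.inr i, rfl⟩]
  r_mul_r := a_mul_a
  r_mul_s := a_mul_xa
  s_mul_r := xa_mul_a
  s_mul_s := xa_mul_xa

/-- For `G = D_m` or `Q_m`, with `α₁ = Σ_{g∈G} x_g g` and
`α₂ = Σ_{g∈⟨a⟩} χ₂(g) x_{g⁻¹} g + Σ_{g∈G∖⟨a⟩} χ₂(g) x_g g` (where `χ₂ = 1` on `⟨a⟩` and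
`χ₂ = −1` off it), one has `α₁ α₂ = Σ_{h∈⟨a⟩} A_h h` in `ℂ[G]`. -/
theorem alpha1_mul_alpha2 (m : ℕ) [NeZero m]
    (x : DihedralGroup m → ℂ) (y : QuaternionGroup m → ℂ) :
    ((∑ g : DihedralGroup m,
        (MonoidAlgebra.single g (x g) : MonoidAlgebra ℂ (DihedralGroup m))) *
      ((∑ k : ZMod m,
          MonoidAlgebra.single (DihedralGroup.r k) (x ((DihedralGroup.r k)⁻¹))) +
        ∑ k : ZMod m,
          MonoidAlgebra.single (DihedralGroup.sr k) (-(x (DihedralGroup.sr k)))) =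
      ∑ k : ZMod m,
        MonoidAlgebra.single (DihedralGroup.r k) (dihedralA m x (DihedralGroup.r k))) ∧
    ((∑ g : QuaternionGroup m,
        (MonoidAlgebra.single g (y g) : MonoidAlgebra ℂ (QuaternionGroup m))) *
      ((∑ k : ZMod (2 * m),
          MonoidAlgebra.single (QuaternionGroup.a k) (y ((QuaternionGroup.a k)⁻¹))) +
        ∑ k : ZMod (2 * m),
          MonoidAlgebra.single (QuaternionGroup.xa k) (-(y (QuaternionGroup.xa k)))) =
      ∑ k : ZMod (2 * m),
        MonoidAlgebra.single (QuaternionGroup.a k) (quaternionA m y (QuaternionGroup.a k))) :=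
  ⟨(DihedralGroup.isDihedralLike m).sum_single_mul_twist x,
    (QuaternionGroup.isDihedralLike m).sum_single_mul_twist y⟩
end

section
/- Let G be D_m with m even, or Q_m; let χ₃, χ₄ be the remaining two degree-one characters of G (with χ₃(a) = χ₄(a) = −1 and χ₃(b) = −χ₄(b), where χ₃(b)χ₄(b) = 1 for D_m with m even and for Q_m with m even, and χ₃(b) = i, χ₄(b) = −i for Q_m with m odd). Define α₃ = Σ_{g∈G} χ₃(g) x_g g and α₄ = Σ_{g∈⟨a⟩} χ₄(g) x_{g^{-1}} g + Σ_{g∈G\⟨a⟩} χ₄(g) x_g g in C[G]. Then α₃ α₄ = Σ_{h∈⟨a⟩} χ'(h) A_h h, where χ' is the order-2 character of ⟨a⟩ (χ'(a^k) = (−1)^k) and A_h = Σ_{g∈⟨a⟩}(x_g x_{hg} − x_{gb} x_{hgb^{-1}}). -/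
/-- `α₃ = Σ_g χ₃(g) x_g g` for `D_m`, where `χ₃(a^k) = (−1)^k`, `χ₃(a^k b) = (−1)^k c₃`
with `c₃ = χ₃(b)`. -/
noncomputable def dihedralAlpha3 (m : ℕ) [NeZero m] (c₃ : ℂ) (x : DihedralGroup m → ℂ) :
    MonoidAlgebra ℂ (DihedralGroup m) :=
  (∑ k : ZMod m, MonoidAlgebra.single (DihedralGroup.r k)
      ((-1 : ℂ) ^ k.val * x (DihedralGroup.r k))) +
  ∑ k : ZMod m, MonoidAlgebra.single (DihedralGroup.r k * DihedralGroup.sr 0)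
      ((-1 : ℂ) ^ k.val * c₃ * x (DihedralGroup.r k * DihedralGroup.sr 0))

/-- `α₄ = Σ_{g∈⟨a⟩} χ₄(g) x_{g⁻¹} g + Σ_{g∉⟨a⟩} χ₄(g) x_g g` for `D_m`, where
`χ₄(a^k) = (−1)^k`, `χ₄(a^k b) = (−1)^k c₄` with `c₄ = χ₄(b)`. -/
noncomputable def dihedralAlpha4 (m : ℕ) [NeZero m] (c₄ : ℂ) (x : DihedralGroup m → ℂ) :
    MonoidAlgebra ℂ (DihedralGroup m) :=
  (∑ k : ZMod m, MonoidAlgebra.single (DihedralGroup.r k)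
      ((-1 : ℂ) ^ k.val * x ((DihedralGroup.r k)⁻¹))) +
  ∑ k : ZMod m, MonoidAlgebra.single (DihedralGroup.r k * DihedralGroup.sr 0)
      ((-1 : ℂ) ^ k.val * c₄ * x (DihedralGroup.r k * DihedralGroup.sr 0))

/-- `α₃ = Σ_g χ₃(g) x_g g` for `Q_m`, where `χ₃(a^k) = (−1)^k`, `χ₃(a^k b) = (−1)^k c₃`. -/
noncomputable def quaternionAlpha3 (m : ℕ) [NeZero m] (c₃ : ℂ) (x : QuaternionGroup m → ℂ) :
    MonoidAlgebra ℂ (QuaternionGroup m) :=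
  (∑ k : ZMod (2 * m), MonoidAlgebra.single (QuaternionGroup.a k)
      ((-1 : ℂ) ^ k.val * x (QuaternionGroup.a k))) +
  ∑ k : ZMod (2 * m), MonoidAlgebra.single (QuaternionGroup.a k * QuaternionGroup.xa 0)
      ((-1 : ℂ) ^ k.val * c₃ * x (QuaternionGroup.a k * QuaternionGroup.xa 0))

/-- `α₄ = Σ_{g∈⟨a⟩} χ₄(g) x_{g⁻¹} g + Σ_{g∉⟨a⟩} χ₄(g) x_g g` for `Q_m`, where
`χ₄(a^k) = (−1)^k`, `χ₄(a^k b) = (−1)^k c₄`. -/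
noncomputable def quaternionAlpha4 (m : ℕ) [NeZero m] (c₄ : ℂ) (x : QuaternionGroup m → ℂ) :
    MonoidAlgebra ℂ (QuaternionGroup m) :=
  (∑ k : ZMod (2 * m), MonoidAlgebra.single (QuaternionGroup.a k)
      ((-1 : ℂ) ^ k.val * x ((QuaternionGroup.a k)⁻¹))) +
  ∑ k : ZMod (2 * m), MonoidAlgebra.single (QuaternionGroup.a k * QuaternionGroup.xa 0)
      ((-1 : ℂ) ^ k.val * c₄ * x (QuaternionGroup.a k * QuaternionGroup.xa 0))

/-!
Write elements of `k[G]` as `Σ f(i) rot i + Σ g(i) (rot i) b`, one sum per coset of the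
subgroup `rot R`. Because `b` inverts the rotations and `b² = rot c`, the product of two such
elements is again of this form, with convolution-type coefficients. For `α₃ α₄`, where
`χ₃ = χ₄ = ε` on `rot R` and `χ₃(b) = c₃ = -χ₄(b)`, the two cross terms landing in the coset of `b`
cancel, while on `rot R` the relation `c₃² = ε c`, i.e. `χ₃(b)² = χ₃(b²)`, turns the contribution
of pairs from the coset of `b` into `-ε(l) Σ x_{gb} x_{hgb⁻¹}` after a shift of the summation index.
-/

open MonoidAlgebra Finset

theorem MonoidAlgebra.single_finset_sum {k M ι : Type*} [Semiring k] (m : M) (s : Finset ι)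
    (u : ι → k) : single m (∑ i ∈ s, u i) = ∑ i ∈ s, single m (u i) :=
  map_sum (singleAddHom m) u s

theorem MonoidAlgebra.sum_sum_single_reindex {k M ι : Type*} [Semiring k] [Fintype ι]
    (φ : ι → M) (σ τ : ι → ι → ι) (hτσ : ∀ i j, τ i (σ i j) = j) (hστ : ∀ i l, σ i (τ i l) = l)
    (u : ι → ι → k) :
    ∑ i, ∑ j, single (φ (σ i j)) (u i j) = ∑ l, single (φ l) (∑ i, u i (τ i l)) := by
  simp_rw [single_finset_sum]
  conv_rhs => rw [sum_comm]
  refine sum_congr rfl fun i _ => Fintype.sum_equiv ⟨σ i, τ i, hτσ i, hστ i⟩ _ _ fun j => ?_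
  simp only [Equiv.coe_fn_mk, hτσ]

theorem AddChar.map_neg_of_mul_self {A M : Type*} [AddGroup A] [Monoid M] {ε : AddChar A M}
    (hε : ∀ a, ε a * ε a = 1) (a : A) : ε (-a) = ε a := by
  rw [← mul_one (ε (-a)), ← hε a, ← mul_assoc, ← AddChar.map_add_eq_mul, neg_add_cancel,
    AddChar.map_zero_eq_one, one_mul]

theorem AddChar.map_sub_eq_mul {A M : Type*} [AddGroup A] [Monoid M] {ε : AddChar A M}
    (hε : ∀ a, ε a * ε a = 1) (a b : A) : ε (a - b) = ε a * ε b := by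
  rw [sub_eq_add_neg, AddChar.map_add_eq_mul, AddChar.map_neg_of_mul_self hε]

def ZMod.negOnePowAddChar (k : Type*) [Ring k] {n : ℕ} [NeZero n] (hn : Even n) :
    AddChar (ZMod n) k where
  toFun a := (-1) ^ a.val
  map_zero_eq_one' := by simp
  map_add_eq_mul' a b := by
    rw [ZMod.val_add, ← pow_add, neg_one_pow_eq_pow_mod_two, Nat.mod_mod_of_dvd _ hn.two_dvd,
      ← neg_one_pow_eq_pow_mod_two]

theorem ZMod.negOnePowAddChar_mul_self (k : Type*) [Ring k] {n : ℕ} [NeZero n] (hn : Even n)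
    (a : ZMod n) : negOnePowAddChar k hn a * negOnePowAddChar k hn a = 1 := by
  show (-1 : k) ^ a.val * (-1) ^ a.val = 1
  rw [← pow_add, Even.neg_one_pow ⟨_, rfl⟩]

def DihedralGroup.rAddChar (n : ℕ) : AddChar (ZMod n) (DihedralGroup n) where
  toFun := r
  map_zero_eq_one' := rfl
  map_add_eq_mul' i j := (r_mul_r i j).symm

def QuaternionGroup.aAddChar (n : ℕ) : AddChar (ZMod (2 * n)) (QuaternionGroup n) where
  toFun := a
  map_zero_eq_one' := rfl
  map_add_eq_mul' i j := (a_mul_a i j).symm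

section CosetSum

variable {k G R : Type*} [CommRing k] [Group G] [AddCommGroup R] [Fintype R]

noncomputable def cosetSum (rot : AddChar R G) (b : G) (f g : R → k) : MonoidAlgebra k G :=
  (∑ i, single (rot i) (f i)) + ∑ i, single (rot i * b) (g i)

variable {rot : AddChar R G} {b : G} {c : R}

theorem cosetSum_mul_cosetSum (hb : ∀ i, b * rot i = rot (-i) * b) (hbb : b * b = rot c)
    (f g f' g' : R → k) :
    cosetSum rot b f g * cosetSum rot b f' g' =
      cosetSum rot b (fun l => ∑ i, (f i * f' (l - i) + g i * g' (i - l + c)))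
        (fun l => ∑ i, (f i * g' (l - i) + g i * f' (i - l))) := by
  have hrr (i j : R) : rot i * rot j = rot (i + j) := (rot.map_add_eq_mul i j).symm
  have hrrb (i j : R) : rot i * (rot j * b) = rot (i + j) * b := by rw [← mul_assoc, hrr]
  have hrbr (i j : R) : rot i * b * rot j = rot (i - j) * b := by
    rw [mul_assoc, hb, ← mul_assoc, hrr, sub_eq_add_neg]
  have hrbrb (i j : R) : rot i * b * (rot j * b) = rot (i - j + c) := by
    rw [← mul_assoc, hrbr, mul_assoc, hbb, hrr]
  simp only [cosetSum, add_mul, mul_add, sum_mul_sum, single_mul_single, hrr, hrrb, hrbr, hrbrb]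
  rw [sum_sum_single_reindex rot (· + ·) (fun i l => l - i) (by simp) (by simp),
    sum_sum_single_reindex (rot · * b) (· + ·) (fun i l => l - i) (by simp) (by simp),
    sum_sum_single_reindex (rot · * b) (· - ·) (· - ·) (by simp) (by simp),
    sum_sum_single_reindex rot (fun i j => i - j + c) (fun i l => i - l + c)
      (fun _ _ => by abel) (fun _ _ => by abel)]
  simp only [single_add, sum_add_distrib]
  abel

variable {ε : AddChar R k}

theorem sum_rot_part_eq (hbb : b * b = rot c) (hε : ∀ i, ε i * ε i = 1) {c₃ : k}
    (hc₃ : c₃ ^ 2 = ε c) (x : G → k) (l : R) :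
    ∑ i, (ε i * x (rot i) * (ε (l - i) * x (rot (l - i))⁻¹) +
        ε i * c₃ * x (rot i * b) * (ε (i - l + c) * -c₃ * x (rot (i - l + c) * b))) =
      ε l * ∑ i, (x (rot i) * x (rot l * rot i) - x (rot i * b) * x (rot l * rot i * b⁻¹)) := by
  have hb_inv : b⁻¹ = rot (-c) * b := by
    refine inv_eq_of_mul_eq_one_left ?_
    rw [mul_assoc, hbb, ← AddChar.map_add_eq_mul, neg_add_cancel, AddChar.map_zero_eq_one]
  have hsum_rot : ∑ i, x (rot i) * x (rot l * rot i) = ∑ i, x (rot (i - l)) * x (rot i) :=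
    Fintype.sum_equiv (Equiv.addLeft l) _ _ fun i => by simp [← AddChar.map_add_eq_mul]
  have hsum_refl : ∑ i, x (rot i * b) * x (rot l * rot i * b⁻¹) =
      ∑ i, x (rot (i - l + c) * b) * x (rot i * b) :=
    Fintype.sum_equiv ((Equiv.addLeft l).trans (Equiv.subRight c)) _ _ fun i => by
      simp only [Equiv.trans_apply, Equiv.coe_addLeft, Equiv.subRight_apply, hb_inv, ← mul_assoc,
        ← AddChar.map_add_eq_mul]
      rw [show l + i - c - l + c = i by abel, ← sub_eq_add_neg, mul_comm]
  rw [sum_sub_distrib, hsum_rot, hsum_refl, ← sum_sub_distrib, mul_sum]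
  refine sum_congr rfl fun i _ => ?_
  rw [← AddChar.map_neg_eq_inv, neg_sub, AddChar.map_add_eq_mul, AddChar.map_sub_eq_mul hε,
    AddChar.map_sub_eq_mul hε]
  linear_combination (ε l * x (rot i) * x (rot (i - l)) -
      ε l * x (rot i * b) * x (rot (i - l + c) * b) * ε c * c₃ ^ 2) * hε i -
    ε l * x (rot i * b) * x (rot (i - l + c) * b) * (ε c * hc₃ + hε c)

theorem sum_refl_part_eq_zero (hε : ∀ i, ε i * ε i = 1) (c₃ : k) (x : G → k) (l : R) :
    ∑ i, (ε i * x (rot i) * (ε (l - i) * -c₃ * x (rot (l - i) * b)) +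
        ε i * c₃ * x (rot i * b) * (ε (i - l) * x (rot (i - l))⁻¹)) = 0 := by
  rw [sum_add_distrib, add_eq_zero_iff_eq_neg, ← sum_neg_distrib]
  exact Fintype.sum_equiv (Equiv.subLeft l) _ _ fun i => by
    simp only [Equiv.subLeft_apply, sub_sub_cancel_left, ← AddChar.map_neg_eq_inv, neg_neg,
      AddChar.map_neg_of_mul_self hε, mul_neg, neg_mul, neg_inj]
    ring

theorem cosetSum_mul_cosetSum_of_addChar (hb : ∀ i, b * rot i = rot (-i) * b)
    (hbb : b * b = rot c) (hε : ∀ i, ε i * ε i = 1) {c₃ : k} (hc₃ : c₃ ^ 2 = ε c) (x : G → k) :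
    cosetSum rot b (fun i => ε i * x (rot i)) (fun i => ε i * c₃ * x (rot i * b)) *
        cosetSum rot b (fun i => ε i * x (rot i)⁻¹) (fun i => ε i * -c₃ * x (rot i * b)) =
      ∑ l, single (rot l)
        (ε l * ∑ i, (x (rot i) * x (rot l * rot i) - x (rot i * b) * x (rot l * rot i * b⁻¹))) := by
  rw [cosetSum_mul_cosetSum hb hbb]
  simp only [sum_rot_part_eq hbb hε hc₃, sum_refl_part_eq_zero hε]
  simp [cosetSum]

end CosetSum

open DihedralGroup in
theorem dihedralAlpha3_mul_dihedralAlpha4 {m : ℕ} [NeZero m] (hm : Even m) {c₃ : ℂ}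
    (hc₃ : c₃ ^ 2 = 1) (x : DihedralGroup m → ℂ) :
    dihedralAlpha3 m c₃ x * dihedralAlpha4 m (-c₃) x =
      ∑ k : ZMod m, single (r k) ((-1 : ℂ) ^ k.val * dihedralA m x (r k)) :=
  cosetSum_mul_cosetSum_of_addChar (rot := rAddChar m) (c := 0) (ε := ZMod.negOnePowAddChar ℂ hm)
    (fun i => show sr 0 * r i = r (-i) * sr 0 by simp) (show sr 0 * sr 0 = r 0 by simp)
    (ZMod.negOnePowAddChar_mul_self ℂ hm)
    (show c₃ ^ 2 = (-1) ^ (0 : ZMod m).val by rw [ZMod.val_zero, pow_zero, hc₃]) x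

open QuaternionGroup in
theorem quaternionAlpha3_mul_quaternionAlpha4 {m : ℕ} [NeZero m] {c₃ : ℂ}
    (hc₃ : c₃ ^ 2 = (-1) ^ m) (y : QuaternionGroup m → ℂ) :
    quaternionAlpha3 m c₃ y * quaternionAlpha4 m (-c₃) y =
      ∑ k : ZMod (2 * m), single (a k) ((-1 : ℂ) ^ k.val * quaternionA m y (a k)) :=
  cosetSum_mul_cosetSum_of_addChar (rot := aAddChar m) (c := m)
    (ε := ZMod.negOnePowAddChar ℂ (even_two_mul m))
    (fun i => show xa 0 * a i = a (-i) * xa 0 by simp) (show xa 0 * xa 0 = a m by simp)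
    (ZMod.negOnePowAddChar_mul_self ℂ _)
    (show c₃ ^ 2 = (-1) ^ (m : ZMod (2 * m)).val by
      rw [ZMod.val_natCast_of_lt (by linarith [NeZero.pos m]), hc₃]) y

/-- For `G = D_m` (`m` even, `χ₃(b) = 1`, `χ₄(b) = −1`) or `G = Q_m` (`χ₃(b) = i`,
`χ₄(b) = −i` for `m` odd; `χ₃(b) = 1`, `χ₄(b) = −1` for `m` even):
`α₃ α₄ = Σ_{h∈⟨a⟩} χ'(h) A_h h`, where `χ'(a^k) = (−1)^k` is the order-2 character of `⟨a⟩`. -/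
theorem alpha3_mul_alpha4 (m : ℕ) [NeZero m]
    (x : DihedralGroup m → ℂ) (y : QuaternionGroup m → ℂ) :
    (Even m →
      dihedralAlpha3 m 1 x * dihedralAlpha4 m (-1) x =
        ∑ k : ZMod m, MonoidAlgebra.single (DihedralGroup.r k)
          ((-1 : ℂ) ^ k.val * dihedralA m x (DihedralGroup.r k))) ∧
    (Odd m →
      quaternionAlpha3 m Complex.I y * quaternionAlpha4 m (-Complex.I) y =
        ∑ k : ZMod (2 * m), MonoidAlgebra.single (QuaternionGroup.a k)
          ((-1 : ℂ) ^ k.val * quaternionA m y (QuaternionGroup.a k))) ∧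
    (Even m →
      quaternionAlpha3 m 1 y * quaternionAlpha4 m (-1) y =
        ∑ k : ZMod (2 * m), MonoidAlgebra.single (QuaternionGroup.a k)
          ((-1 : ℂ) ^ k.val * quaternionA m y (QuaternionGroup.a k))) :=
  ⟨fun hm => dihedralAlpha3_mul_dihedralAlpha4 hm (one_pow 2) x,
    fun hm => quaternionAlpha3_mul_quaternionAlpha4 (by rw [Complex.I_sq, hm.neg_one_pow]) y,
    fun hm => quaternionAlpha3_mul_quaternionAlpha4 (by rw [one_pow, hm.neg_one_pow]) y⟩
end

section
/- Let G be D_m or Q_m, α₁ = Σ_{g∈G} x_g g, and α₂ = Σ_{g∈⟨a⟩} x_{g^{-1}} g − Σ_{g∈G\⟨a⟩} x_g g in C[G]. Then α₁ and α₂ commute: α₁α₂ = α₂α₁. -/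
/-!
Split `G` into the cyclic subgroup `⟨a⟩` and its coset, writing `α₁ = A + B` and `α₂ = A' - B`,
where `A'` is the image of `A` under `g ↦ g⁻¹`. Since `⟨a⟩` is abelian, `A` and `A'` commute, and
since every element `s` of the coset satisfies `s g = g⁻¹ s` for `g ∈ ⟨a⟩`, we get `B A = A' B`
and `B A' = A B`. Expanding, both `α₁ α₂` and `α₂ α₁` equal `A A' - B²`.
-/

open MonoidAlgebra

theorem Commute.add_sub_of_semiconjBy {R : Type*} [NonUnitalNonAssocRing R] {a a' b : R}
    (haa' : Commute a a') (hba : SemiconjBy b a a') (hba' : SemiconjBy b a' a) :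
    Commute (a + b) (a' - b) := by
  rw [Commute, SemiconjBy, add_mul, mul_sub, mul_sub, sub_mul, mul_add, mul_add, hba.eq,
    hba'.eq, haa'.eq]
  abel

namespace MonoidAlgebra

variable {k G ι : Type*}

theorem single_semiconjBy_single [CommSemiring k] [Mul G] {s g g' : G}
    (h : SemiconjBy s g g') (a b : k) : SemiconjBy (single s a) (single g b) (single g' b) := by
  rw [SemiconjBy, single_mul_single, single_mul_single, h.eq, mul_comm]

theorem commute_sum_single_of_map_add [CommSemiring k] [Mul G] [AddCommMagma ι] [Fintype ι]
    {ρ : ι → G} (hρ : ∀ i j, ρ i * ρ j = ρ (i + j)) (c d : ι → k) :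
    Commute (∑ i, single (ρ i) (c i)) (∑ j, single (ρ j) (d j)) :=
  Commute.sum_left _ _ _ fun i _ => Commute.sum_right _ _ _ fun j _ =>
    single_commute_single (by rw [Commute, SemiconjBy, hρ, hρ, add_comm]) (Commute.all _ _)

theorem sum_single_semiconjBy_sum_single_neg [CommSemiring k] [Mul G] [InvolutiveNeg ι]
    [Fintype ι] {ρ σ : ι → G} (hσ : ∀ i j, σ i * ρ j = ρ (-j) * σ i) (c d : ι → k) :
    SemiconjBy (∑ i, single (σ i) (d i)) (∑ j, single (ρ j) (c j))
      (∑ j, single (ρ j) (c (-j))) := by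
  rw [SemiconjBy, Finset.sum_mul, Finset.mul_sum]
  refine Finset.sum_congr rfl fun i _ => ?_
  rw [Finset.mul_sum, Finset.sum_mul]
  refine Fintype.sum_equiv (Equiv.neg ι) _ _ fun j => ?_
  rw [Equiv.neg_apply, neg_neg]
  exact single_semiconjBy_single (hσ i j) (d i) (c j)

theorem commute_sum_add_sum_sub_sum [CommRing k] [Mul G] [AddCommGroup ι] [Fintype ι]
    {ρ σ : ι → G} (hρ : ∀ i j, ρ i * ρ j = ρ (i + j)) (hσ : ∀ i j, σ i * ρ j = ρ (-j) * σ i)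
    (c d : ι → k) :
    Commute (∑ i, single (ρ i) (c i) + ∑ i, single (σ i) (d i))
      (∑ i, single (ρ i) (c (-i)) - ∑ i, single (σ i) (d i)) := by
  refine (commute_sum_single_of_map_add hρ _ _).add_sub_of_semiconjBy
    (sum_single_semiconjBy_sum_single_neg hσ c d) ?_
  simpa only [neg_neg] using sum_single_semiconjBy_sum_single_neg hσ (fun i => c (-i)) d

end MonoidAlgebra

theorem DihedralGroup.sum_univ_eq_sum_r_add_sum_sr {n : ℕ} [NeZero n] {M : Type*}
    [AddCommMonoid M] (f : DihedralGroup n → M) :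
    ∑ g, f g = ∑ i, f (r i) + ∑ i, f (sr i) := by
  rw [← equivSum.symm.sum_comp, Fintype.sum_sum_type]
  rfl

theorem DihedralGroup.sr_mul_r_eq_r_neg_mul_sr {n : ℕ} (i j : ZMod n) :
    sr i * r j = r (-j) * sr i := by
  rw [sr_mul_r, r_mul_sr, sub_neg_eq_add]

def QuaternionGroup.equivSum_s13 (n : ℕ) : QuaternionGroup n ≃ ZMod (2 * n) ⊕ ZMod (2 * n) where
  toFun
    | a j => .inl j
    | xa j => .inr j
  invFun
    | .inl j => a j
    | .inr j => xa j
  left_inv := by rintro (j | j) <;> rfl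
  right_inv := by rintro (j | j) <;> rfl

theorem QuaternionGroup.sum_univ_eq_sum_a_add_sum_xa {n : ℕ} [NeZero n] {M : Type*}
    [AddCommMonoid M] (f : QuaternionGroup n → M) :
    ∑ g, f g = ∑ i, f (a i) + ∑ i, f (xa i) := by
  rw [← (equivSum_s13 n).symm.sum_comp, Fintype.sum_sum_type]
  rfl

theorem QuaternionGroup.inv_a {n : ℕ} (i : ZMod (2 * n)) : (a i)⁻¹ = a (-i) :=
  rfl

theorem QuaternionGroup.xa_mul_a_eq_a_neg_mul_xa {n : ℕ} (i j : ZMod (2 * n)) :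
    xa i * a j = a (-j) * xa i := by
  rw [xa_mul_a, a_mul_xa, sub_neg_eq_add]

/-- For `G = D_m` or `Q_m`, the elements `α₁ = Σ_{g∈G} x_g g` and
`α₂ = Σ_{g∈⟨a⟩} x_{g⁻¹} g − Σ_{g∈G∖⟨a⟩} x_g g` of `ℂ[G]` commute. -/
theorem alpha1_alpha2_commute (m : ℕ) [NeZero m]
    (x : DihedralGroup m → ℂ) (y : QuaternionGroup m → ℂ) :
    (∀ α₁ α₂ : MonoidAlgebra ℂ (DihedralGroup m),
      α₁ = (∑ g : DihedralGroup m, MonoidAlgebra.single g (x g)) →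
      α₂ = (∑ k : ZMod m,
              MonoidAlgebra.single (DihedralGroup.r k) (x ((DihedralGroup.r k)⁻¹))) -
           (∑ k : ZMod m,
              MonoidAlgebra.single (DihedralGroup.sr k) (x (DihedralGroup.sr k))) →
      α₁ * α₂ = α₂ * α₁) ∧
    (∀ α₁ α₂ : MonoidAlgebra ℂ (QuaternionGroup m),
      α₁ = (∑ g : QuaternionGroup m, MonoidAlgebra.single g (y g)) →
      α₂ = (∑ k : ZMod (2 * m),
              MonoidAlgebra.single (QuaternionGroup.a k) (y ((QuaternionGroup.a k)⁻¹))) -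
           (∑ k : ZMod (2 * m),
              MonoidAlgebra.single (QuaternionGroup.xa k) (y (QuaternionGroup.xa k))) →
      α₁ * α₂ = α₂ * α₁) := by
  refine ⟨fun α₁ α₂ h₁ h₂ => ?_, fun α₁ α₂ h₁ h₂ => ?_⟩
  · rw [h₁, h₂, DihedralGroup.sum_univ_eq_sum_r_add_sum_sr]
    simp only [DihedralGroup.inv_r]
    exact (commute_sum_add_sum_sub_sum DihedralGroup.r_mul_r
      DihedralGroup.sr_mul_r_eq_r_neg_mul_sr (fun k => x (.r k)) (fun k => x (.sr k))).eq
  · rw [h₁, h₂, QuaternionGroup.sum_univ_eq_sum_a_add_sum_xa]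
    simp only [QuaternionGroup.inv_a]
    exact (commute_sum_add_sum_sub_sum QuaternionGroup.a_mul_a
      QuaternionGroup.xa_mul_a_eq_a_neg_mul_xa (fun k => y (.a k)) (fun k => y (.xa k))).eq
end
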